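/- Let F be a field and let {(K_i, A_i), φ_i^{i+1}} be an inverse sequence of pairs of finite complexes with limit pair (X, ∂X), such that there exist classes v_i ∈ H_n(K_i, A_i; F) with (φ_{i}^{i+1})_*(v_{i+1}) = v_i and v_0 ≠ 0. Then the Čech cohomology group Ȟⁿ(X, ∂X; F) is nonzero; in particular dim_F X ≥ n. -/
import Mathlib

/-- The composite bonding map `H (i+j) → H i` of an inverse sequence. -/
def bondingComp {F : Type*} [Field F] {H : ℕ → Type*}
    [∀ i, AddCommGroup (H i)] [∀ i, Module F (H i)]
    (φ : ∀ i, H (i + 1) →ₗ[F] H i) : ∀ (i j : ℕ), H (i + j) →ₗ[F] H i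
  | _, 0 => LinearMap.id
  | i, j + 1 => (bondingComp φ i j).comp (φ (i + j))

theorem bondingComp_v {F : Type*} [Field F] {H : ℕ → Type*}
    [∀ i, AddCommGroup (H i)] [∀ i, Module F (H i)]
    (φ : ∀ i, H (i + 1) →ₗ[F] H i) (v : ∀ i, H i)
    (hv : ∀ i, φ i (v (i + 1)) = v i) (i j : ℕ) :
    bondingComp φ i j (v (i + j)) = v i := by
  induction j with
  | zero => rfl
  | succ j ih =>
    show (bondingComp φ i j) ((φ (i + j)) (v ((i + j) + 1))) = v i
    rw [hv, ih]

/-- Let `{(K_i, A_i)}` be an inverse sequence of pairs of finite complexes with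
limit `(X, ∂X)` and set `H i = H_n(K_i, A_i; F)` (finite-dimensional `F`-vector spaces) with
bonding maps `φ i`.  If there are compatible classes `v i ∈ H i` with `v 0 ≠ 0`, then the Čech
cohomology `Ȟⁿ(X,∂X;F) = colim Hⁿ(K_i,A_i;F) = colim (H i)^*` is nonzero: there is a stage
`i` and a functional `ξ` on `H i` whose image at every later stage of the colimit of dual
spaces is nonzero (so `dim_F X ≥ n`). -/
theorem stmt_10 (F : Type*) [Field F] (n : ℕ)
    (H : ℕ → Type*) [∀ i, AddCommGroup (H i)] [∀ i, Module F (H i)]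
    [∀ i, FiniteDimensional F (H i)]
    (φ : ∀ i, H (i + 1) →ₗ[F] H i)
    (v : ∀ i, H i) (hv : ∀ i, φ i (v (i + 1)) = v i) (hv0 : v 0 ≠ 0) :
    ∃ (i : ℕ) (ξ : Module.Dual F (H i)), ∀ j : ℕ, ξ.comp (bondingComp φ i j) ≠ 0 := by
  have : ¬ ∀ ξ : Module.Dual F (H 0), ξ (v 0) = 0 := by
    rw [Module.forall_dual_apply_eq_zero_iff]; exact hv0
  push_neg at this
  obtain ⟨ξ, hξ⟩ := this
  refine ⟨0, ξ, fun j h => hξ ?_⟩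
  have := LinearMap.congr_fun h (v (0 + j))
  simpa [bondingComp_v φ v hv 0 j] using this
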